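/- arXiv:0804.0655 — 2 statements merged into one kernel-verified Lean document; each statement's English description precedes it below -/
import Mathlib

section
/- If Re(c - a - b2) > 0, then F1(a; b1, b2; c; x, 1) = (Gamma(c) Gamma(c-a-b2) / (Gamma(c-a) Gamma(c-b2))) * 2F1(a, b1; c-b2; x) for |x| < 1. -/
noncomputable def poch (a : ℂ) (n : ℕ) : ℂ := (ascPochhammer ℂ n).eval a

noncomputable def hpg21 (A B C z : ℂ) : ℂ :=
  ∑' n : ℕ, poch A n * poch B n / (poch C n * (n.factorial : ℂ)) * z ^ n

noncomputable def F1 (a b1 b2 c x y : ℂ) : ℂ :=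
  ∑' p : ℕ × ℕ, poch a (p.1 + p.2) * poch b1 p.1 * poch b2 p.2 /
    (poch c (p.1 + p.2) * (p.1.factorial : ℂ) * (p.2.factorial : ℂ)) * x ^ p.1 * y ^ p.2

open Finset Filter Topology Asymptotics Complex

/-!
Splitting `(a)_{n+m} = (a)_n (a+n)_m` and `(c)_{n+m} = (c)_n (c+n)_m`, the sum over `m` of the
`(n, m)` term of `F1(x, 1)` is the `n`-th term of `₂F₁(a, b₁; c; x)` times `₂F₁(a+n, b₂; c+n; 1)`,
which Gauss's theorem evaluates as `Γ(c+n) Γ(c-a-b₂) / (Γ(c-a) Γ(c+n-b₂))`; then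
`Γ(c+n) = (c)_n Γ(c)` and `Γ(c-b₂+n) = (c-b₂)_n Γ(c-b₂)` turn the outer sum into the claimed
series. The summations may be exchanged because the coefficients of `₂F₁(a, b₂; c; 1)` are
`O(m^(-1-Re(c-a-b₂)))`, while the inner series in `n` are dominated, uniformly for large `m`, by a
fixed hypergeometric series of radius `1`.

For Gauss's theorem write `F(C) = ₂F₁(A, B; C; 1) = ∑ c_m`. The contiguous relation
`C (C-A-B) F(C) = (C-A) (C-B) F(C+1)` holds because the difference of the two series telescopes,
with partial sums `-C M c_M → 0`. Iterating it gives
`F(C) = (C-A)_K (C-B)_K / ((C)_K (C-A-B)_K) · F(C+K)`, and as `K → ∞` the Pochhammer ratio tends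
to the Gamma ratio by Euler's limit formula, while `F(C+K) → 1` by dominated convergence.
-/

section Pochhammer

lemma poch_zero (z : ℂ) : poch z 0 = 1 := by simp [poch]

lemma poch_succ (z : ℂ) (n : ℕ) : poch z (n + 1) = poch z n * (z + n) :=
  ascPochhammer_succ_eval n z

lemma poch_eq_prod (z : ℂ) (n : ℕ) : poch z n = ∏ j ∈ range n, (z + j) := by
  induction n with
  | zero => simp [poch]
  | succ n ih => rw [poch_succ, prod_range_succ, ih]

lemma poch_add (z : ℂ) (n m : ℕ) : poch z (n + m) = poch z n * poch (z + n) m := by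
  simp only [poch_eq_prod, prod_range_add, Nat.cast_add, add_assoc]

lemma poch_succ' (z : ℂ) (n : ℕ) : poch z (n + 1) = z * poch (z + 1) n := by
  rw [add_comm n, poch_add, poch_eq_prod z 1]
  simp

lemma poch_one (n : ℕ) : poch 1 n = n.factorial := ascPochhammer_eval_one ℂ n

lemma ne_neg_natCast_of_re_pos {z : ℂ} (hz : 0 < z.re) (j : ℕ) : z ≠ -j := by
  rintro rfl
  simp only [neg_re, natCast_re, Left.neg_pos_iff] at hz
  exact (Nat.cast_nonneg j).not_gt hz

lemma add_natCast_ne_zero {z : ℂ} (hz : ∀ j : ℕ, z ≠ -j) (k : ℕ) : z + k ≠ 0 := fun h =>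
  hz k (eq_neg_of_add_eq_zero_left h)

lemma poch_ne_zero {z : ℂ} (hz : ∀ j : ℕ, z ≠ -j) (n : ℕ) : poch z n ≠ 0 := by
  rw [poch_eq_prod]
  exact prod_ne_zero_iff.mpr fun j _ => add_natCast_ne_zero hz j

lemma poch_neg_natCast_of_lt {k m : ℕ} (hk : k < m) : poch (-k) m = 0 := by
  rw [poch_eq_prod]
  exact prod_eq_zero (mem_range.mpr hk) (neg_add_cancel _)

lemma add_natCast_ne_neg_natCast {z : ℂ} (hz : ∀ j : ℕ, z ≠ -j) (k : ℕ) :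
    ∀ j : ℕ, z + k ≠ -j := fun j h =>
  hz (j + k) (by push_cast; linear_combination h)

lemma Gamma_add_natCast {z : ℂ} (hz : ∀ j : ℕ, z ≠ -j) (n : ℕ) :
    Gamma (z + n) = poch z n * Gamma z := by
  induction n with
  | zero => simp [poch_zero]
  | succ n ih =>
    rw [Nat.cast_succ, ← add_assoc, Gamma_add_one _ (add_natCast_ne_zero hz n),
      ih, poch_succ]
    ring

lemma norm_poch (z : ℂ) (n : ℕ) : ‖poch z n‖ = ∏ j ∈ range n, ‖z + j‖ := by
  rw [poch_eq_prod, norm_prod]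

lemma norm_poch_le_norm_poch {z w : ℂ} (h : ∀ j : ℕ, ‖z + j‖ ≤ ‖w + j‖) (n : ℕ) :
    ‖poch z n‖ ≤ ‖poch w n‖ := by
  simp only [norm_poch]
  exact prod_le_prod (fun _ _ => norm_nonneg _) fun j _ => h j

lemma norm_poch_mul_norm_poch_le {z w z' w' : ℂ}
    (h : ∀ j : ℕ, ‖z + j‖ * ‖w + j‖ ≤ ‖z' + j‖ * ‖w' + j‖) (n : ℕ) :
    ‖poch z n‖ * ‖poch w n‖ ≤ ‖poch z' n‖ * ‖poch w' n‖ := by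
  simp only [norm_poch, ← prod_mul_distrib]
  exact prod_le_prod (fun _ _ => by positivity) fun j _ => h j

lemma norm_ofReal_add_natCast {r : ℝ} (hr : 0 ≤ r) (j : ℕ) : ‖(r : ℂ) + j‖ = r + j := by
  rw [← ofReal_natCast, ← ofReal_add, Complex.norm_of_nonneg (by positivity)]

lemma sub_norm_le_norm_add_natCast (z : ℂ) (k : ℕ) : k - ‖z‖ ≤ ‖z + k‖ := by
  simpa [add_comm] using norm_sub_norm_le (k : ℂ) (-z)

lemma norm_poch_le_norm_poch_norm (z : ℂ) (n : ℕ) : ‖poch z n‖ ≤ ‖poch (‖z‖ : ℂ) n‖ :=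
  norm_poch_le_norm_poch (fun j => by
    rw [norm_ofReal_add_natCast (norm_nonneg z)]
    exact (norm_add_le _ _).trans_eq (by simp)) n

end Pochhammer

noncomputable def hpg21Coeff (A B C : ℂ) (n : ℕ) : ℂ :=
  poch A n * poch B n / (poch C n * (n.factorial : ℂ))

lemma hpg21_eq_tsum (A B C z : ℂ) : hpg21 A B C z = ∑' n, hpg21Coeff A B C n * z ^ n := rfl

lemma hpg21Coeff_zero (A B C : ℂ) : hpg21Coeff A B C 0 = 1 := by
  simp [hpg21Coeff, poch_zero]

lemma norm_hpg21Coeff (A B C : ℂ) (n : ℕ) :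
    ‖hpg21Coeff A B C n‖ = ‖poch A n‖ * ‖poch B n‖ / (‖poch C n‖ * n.factorial) := by
  simp [hpg21Coeff]

section Asymptotics

lemma GammaSeq_mul_poch {z : ℂ} (hz : ∀ j : ℕ, z ≠ -j) (m : ℕ) :
    GammaSeq z m * (poch z m * (z + m)) = (m : ℂ) ^ z * m.factorial := by
  rw [← poch_succ, poch_eq_prod, GammaSeq]
  exact div_mul_cancel₀ _ (by rw [← poch_eq_prod]; exact poch_ne_zero hz _)

lemma tendsto_add_natCast_div_add_natCast (w z : ℂ) :
    Tendsto (fun m : ℕ => (w + m) / (z + m)) atTop (𝓝 1) := by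
  simpa using tendsto_add_mul_div_add_mul_atTop_nhds w z (1 : ℂ) one_ne_zero

/-- At a pole `z = -k` of `Γ` this holds because Mathlib sets `Γ (-k) = 0`, while `(z)_m = 0`
for `m > k`. -/
theorem tendsto_cpow_mul_poch_div_poch (z : ℂ) {w : ℂ} (hw : ∀ j : ℕ, w ≠ -j) :
    Tendsto (fun m : ℕ => (m : ℂ) ^ (w - z) * poch z m / poch w m) atTop
      (𝓝 (Gamma w / Gamma z)) := by
  by_cases hz : ∃ k : ℕ, z = -k
  · obtain ⟨k, rfl⟩ := hz
    rw [Gamma_neg_nat_eq_zero, div_zero]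
    refine tendsto_const_nhds.congr' ?_
    filter_upwards [eventually_gt_atTop k] with m hm
    rw [poch_neg_natCast_of_lt hm, mul_zero, zero_div]
  push Not at hz
  have hlim := ((GammaSeq_tendsto_Gamma w).div (GammaSeq_tendsto_Gamma z) (Gamma_ne_zero hz)).mul
    (tendsto_add_natCast_div_add_natCast w z)
  rw [mul_one] at hlim
  refine hlim.congr' ?_
  filter_upwards [eventually_ne_atTop 0] with m hm
  have hm0 : (m : ℂ) ≠ 0 := Nat.cast_ne_zero.mpr hm
  have hzm := add_natCast_ne_zero hz m
  have hwm := add_natCast_ne_zero hw m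
  have hpz := poch_ne_zero hz m
  have hpw := poch_ne_zero hw m
  have : (m : ℂ) ^ z ≠ 0 := cpow_ne_zero_iff.mpr (Or.inl hm0)
  have : (m.factorial : ℂ) ≠ 0 := Nat.cast_ne_zero.mpr m.factorial_ne_zero
  rw [Pi.div_apply, cpow_sub _ _ hm0,
    eq_div_of_mul_eq (mul_ne_zero hpz hzm) (GammaSeq_mul_poch hz m),
    eq_div_of_mul_eq (mul_ne_zero hpw hwm) (GammaSeq_mul_poch hw m)]
  field_simp

variable (A B : ℂ) {C : ℂ}

theorem tendsto_cpow_mul_hpg21Coeff (hC : ∀ j : ℕ, C ≠ -j) :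
    Tendsto (fun m : ℕ => (m : ℂ) ^ (C - A - B + 1) * hpg21Coeff A B C m) atTop
      (𝓝 (Gamma C / (Gamma A * Gamma B))) := by
  have hlim := (tendsto_cpow_mul_poch_div_poch A hC).mul
    (tendsto_cpow_mul_poch_div_poch B (ne_neg_natCast_of_re_pos (z := 1) (by simp)))
  rw [Gamma_one, div_mul_div_comm, mul_one] at hlim
  refine hlim.congr' ?_
  filter_upwards [eventually_ne_atTop 0] with m hm
  rw [hpg21Coeff, ← poch_one, show C - A - B + 1 = (C - A) + (1 - B) by ring,
    cpow_add _ _ (Nat.cast_ne_zero.mpr hm)]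
  ring

theorem hpg21Coeff_isBigO (hC : ∀ j : ℕ, C ≠ -j) :
    hpg21Coeff A B C =O[atTop] fun m : ℕ => (m : ℝ) ^ (-((C - A - B).re + 1)) := by
  have hpow : (fun m : ℕ => (m : ℂ) ^ (-(C - A - B + 1))) =O[atTop]
      fun m : ℕ => (m : ℝ) ^ (-((C - A - B).re + 1)) := by
    refine IsBigO.of_bound 1 ?_
    filter_upwards [eventually_gt_atTop 0] with m hm
    rw [norm_natCast_cpow_of_pos hm, Real.norm_of_nonneg (by positivity)]
    simp
  have h := hpow.mul ((tendsto_cpow_mul_hpg21Coeff A B hC).isBigO_one ℝ)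
  simp only [mul_one] at h
  refine h.congr' ?_ EventuallyEq.rfl
  filter_upwards [eventually_ne_atTop 0] with m hm
  rw [← mul_assoc, ← cpow_add _ _ (Nat.cast_ne_zero.mpr hm), neg_add_cancel, cpow_zero, one_mul]

theorem summable_norm_hpg21Coeff (hC : ∀ j : ℕ, C ≠ -j) (hre : 0 < (C - A - B).re) :
    Summable fun m => ‖hpg21Coeff A B C m‖ :=
  summable_of_isBigO_nat (Real.summable_nat_rpow.mpr (by linarith))
    (hpg21Coeff_isBigO A B hC).norm_left

theorem tendsto_natCast_mul_hpg21Coeff (hC : ∀ j : ℕ, C ≠ -j) (hre : 0 < (C - A - B).re) :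
    Tendsto (fun m : ℕ => (m : ℂ) * hpg21Coeff A B C m) atTop (𝓝 0) := by
  have hpow : Tendsto (fun m : ℕ => (m : ℂ) ^ (-(C - A - B))) atTop (𝓝 0) := by
    rw [tendsto_zero_iff_norm_tendsto_zero]
    refine ((tendsto_rpow_neg_atTop hre).comp tendsto_natCast_atTop_atTop).congr' ?_
    filter_upwards [eventually_gt_atTop 0] with m hm
    simp [norm_natCast_cpow_of_pos hm]
  have h := hpow.mul (tendsto_cpow_mul_hpg21Coeff A B hC)
  rw [zero_mul] at h
  refine h.congr' ?_
  filter_upwards [eventually_ne_atTop 0] with m hm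
  rw [← mul_assoc, ← cpow_add _ _ (Nat.cast_ne_zero.mpr hm),
    show -(C - A - B) + (C - A - B + 1) = 1 by ring, cpow_one]

end Asymptotics

lemma tsum_sub_succ_eq {G : Type*} [AddCommGroup G] [TopologicalSpace G]
    [IsTopologicalAddGroup G] [T2Space G] {f : ℕ → G} {l : G}
    (hs : Summable fun n => f n - f (n + 1)) (hf : Tendsto f atTop (𝓝 l)) :
    ∑' n, (f n - f (n + 1)) = f 0 - l :=
  tendsto_nhds_unique hs.hasSum.tendsto_sum_nat
    (by simpa only [sum_range_sub'] using hf.const_sub (f 0))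

section Gauss

variable (A B : ℂ) {C : ℂ}

lemma hpg21Coeff_contiguous (hC : ∀ j : ℕ, C ≠ -j) (m : ℕ) :
    C * (C - A - B) * hpg21Coeff A B C m - (C - A) * (C - B) * hpg21Coeff A B (C + 1) m =
      C * (m * hpg21Coeff A B C m - (m + 1 : ℕ) * hpg21Coeff A B C (m + 1)) := by
  have hC0 : C ≠ 0 := by simpa using hC 0
  have := add_natCast_ne_zero hC m
  have := poch_ne_zero hC m
  have : (m.factorial : ℂ) ≠ 0 := Nat.cast_ne_zero.mpr m.factorial_ne_zero
  have hshift : poch (C + 1) m = poch C m * (C + m) / C := by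
    rw [eq_div_iff hC0, mul_comm, ← poch_succ', poch_succ]
  simp only [hpg21Coeff, hshift, poch_succ, Nat.factorial_succ]
  push_cast
  field_simp
  ring

theorem mul_tsum_hpg21Coeff_eq (hC : ∀ j : ℕ, C ≠ -j) (hre : 0 < (C - A - B).re) :
    C * (C - A - B) * ∑' m, hpg21Coeff A B C m =
      (C - A) * (C - B) * ∑' m, hpg21Coeff A B (C + 1) m := by
  have hC1 : ∀ j : ℕ, C + 1 ≠ -j := by simpa using add_natCast_ne_neg_natCast hC 1
  have hre1 : 0 < (C + 1 - A - B).re := by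
    simp only [sub_re, add_re, one_re] at hre ⊢
    linarith
  have hs := ((summable_norm_hpg21Coeff A B hC hre).of_norm).mul_left (C * (C - A - B))
  have hs1 := ((summable_norm_hpg21Coeff A B hC1 hre1).of_norm).mul_left ((C - A) * (C - B))
  have htel := (hs.sub hs1).congr (hpg21Coeff_contiguous A B hC)
  rw [summable_mul_left_iff (by simpa using hC 0)] at htel
  have h := tsum_sub_succ_eq htel (tendsto_natCast_mul_hpg21Coeff A B hC hre)
  rw [Nat.cast_zero, zero_mul, sub_zero] at h
  rw [← sub_eq_zero, ← tsum_mul_left, ← tsum_mul_left, ← hs.tsum_sub hs1,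
    tsum_congr (hpg21Coeff_contiguous A B hC), tsum_mul_left, h, mul_zero]

theorem poch_mul_tsum_hpg21Coeff (hC : ∀ j : ℕ, C ≠ -j) (hre : 0 < (C - A - B).re) (K : ℕ) :
    poch C K * poch (C - A - B) K * ∑' m, hpg21Coeff A B C m =
      poch (C - A) K * poch (C - B) K * ∑' m, hpg21Coeff A B (C + K) m := by
  induction K with
  | zero => simp [poch_zero]
  | succ K ih =>
    have step := mul_tsum_hpg21Coeff_eq A B (add_natCast_ne_neg_natCast hC K) (by
      simp only [sub_re, add_re, natCast_re] at hre ⊢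
      linarith [K.cast_nonneg (α := ℝ)])
    rw [Nat.cast_succ, ← add_assoc, poch_succ, poch_succ, poch_succ, poch_succ]
    linear_combination (C + K) * (C - A - B + K) * ih + poch (C - A) K * poch (C - B) K * step

lemma norm_mul_norm_hpg21Coeff_le {p : ℝ} (hp : 0 < p) {z : ℂ}
    (hz : ∀ j : ℕ, p + j ≤ ‖z + j‖) {m : ℕ} (hm : m ≠ 0) :
    ‖z‖ * ‖hpg21Coeff A B z m‖ ≤ p * ‖hpg21Coeff ‖A‖ ‖B‖ p m‖ := by
  obtain ⟨k, rfl⟩ := Nat.exists_eq_succ_of_ne_zero hm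
  have hpz : ∀ {n : ℕ} (j : ℕ), ‖(p : ℂ) + n + j‖ ≤ ‖z + n + j‖ := fun {n} j => by
    rw [add_assoc, add_assoc, ← Nat.cast_add, norm_ofReal_add_natCast hp.le]
    exact hz _
  have hP : ‖z‖ * ‖poch (p : ℂ) (k + 1)‖ ≤ p * ‖poch z (k + 1)‖ := by
    rw [poch_succ', poch_succ', norm_mul, norm_mul, norm_real, Real.norm_of_nonneg hp.le,
      mul_left_comm]
    gcongr
    exact norm_poch_le_norm_poch (by simpa using hpz (n := 1)) k
  have hPpos : 0 < ‖poch (p : ℂ) (k + 1)‖ :=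
    norm_pos_iff.mpr (poch_ne_zero (ne_neg_natCast_of_re_pos (by simpa using hp)) _)
  have hZpos : 0 < ‖poch z (k + 1)‖ :=
    hPpos.trans_le (norm_poch_le_norm_poch (by simpa using hpz (n := 0)) _)
  have hf : (0 : ℝ) < (k + 1).factorial := by positivity
  rw [norm_hpg21Coeff, norm_hpg21Coeff]
  calc ‖z‖ * (‖poch A (k + 1)‖ * ‖poch B (k + 1)‖ / (‖poch z (k + 1)‖ * (k + 1).factorial))
      = ‖z‖ * ‖poch (p : ℂ) (k + 1)‖ * (‖poch A (k + 1)‖ * ‖poch B (k + 1)‖) /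
          (‖poch (p : ℂ) (k + 1)‖ * ‖poch z (k + 1)‖ * (k + 1).factorial) := by
        field_simp
    _ ≤ p * ‖poch z (k + 1)‖ * (‖poch (‖A‖ : ℂ) (k + 1)‖ * ‖poch (‖B‖ : ℂ) (k + 1)‖) /
          (‖poch (p : ℂ) (k + 1)‖ * ‖poch z (k + 1)‖ * (k + 1).factorial) := by
        gcongr
        exacts [norm_poch_le_norm_poch_norm A _, norm_poch_le_norm_poch_norm B _]
    _ = p * (‖poch (‖A‖ : ℂ) (k + 1)‖ * ‖poch (‖B‖ : ℂ) (k + 1)‖ /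
          (‖poch (p : ℂ) (k + 1)‖ * (k + 1).factorial)) := by
        field_simp

theorem tendsto_tsum_hpg21Coeff_add_natCast (C : ℂ) :
    Tendsto (fun K : ℕ => ∑' m, hpg21Coeff A B (C + K) m) atTop (𝓝 1) := by
  set p : ℝ := ‖A‖ + ‖B‖ + 1
  have hp : 0 < p := by positivity
  set W : ℕ → ℝ := fun m => ‖hpg21Coeff ‖A‖ ‖B‖ p m‖
  have hW : Summable W := summable_norm_hpg21Coeff _ _
    (ne_neg_natCast_of_re_pos (by simpa using hp)) (by simp [p]; linarith)
  have hnorm : Tendsto (fun K : ℕ => ‖C + K‖) atTop atTop :=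
    tendsto_atTop_mono (sub_norm_le_norm_add_natCast C)
      (tendsto_atTop_add_const_right _ _ tendsto_natCast_atTop_atTop)
  have hlarge : ∀ᶠ K : ℕ in atTop, ∀ j : ℕ, p + j ≤ ‖C + K + j‖ := by
    filter_upwards [eventually_ge_atTop ⌈p + ‖C‖⌉₊] with K hK j
    have h1 := sub_norm_le_norm_add_natCast C (K + j)
    have h2 : p + ‖C‖ ≤ K := (Nat.le_ceil _).trans (by exact_mod_cast hK)
    push_cast at h1
    rw [add_assoc C]
    linarith
  have hdecay : ∀ᶠ K : ℕ in atTop, p ≤ ‖C + K‖ ∧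
      ∀ m ≠ 0, ‖C + K‖ * ‖hpg21Coeff A B (C + K) m‖ ≤ p * W m :=
    hlarge.mono fun K hK =>
      ⟨by simpa using hK 0, fun m hm => norm_mul_norm_hpg21Coeff_le A B hp hK hm⟩
  rw [← tsum_ite_eq (0 : ℕ) fun _ => (1 : ℂ)]
  refine tendsto_tsum_of_dominated_convergence hW (fun m => ?_) ?_
  · rcases eq_or_ne m 0 with rfl | hm
    · simp [hpg21Coeff_zero]
    simp only [hm, if_false]
    refine squeeze_zero_norm' ?_ (by simpa using hnorm.inv_tendsto_atTop.mul_const (p * W m))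
    filter_upwards [hdecay] with K ⟨hpK, hK⟩
    rw [le_inv_mul_iff₀ (hp.trans_le hpK)]
    exact hK m hm
  · filter_upwards [hdecay] with K ⟨hpK, hK⟩ m
    rcases eq_or_ne m 0 with rfl | hm
    · simp [W, hpg21Coeff_zero]
    exact le_of_mul_le_mul_left
      ((mul_le_mul_of_nonneg_right hpK (norm_nonneg _)).trans (hK m hm)) hp

theorem tendsto_poch_ratio (hC : ∀ j : ℕ, C ≠ -j)
    (hCAB : ∀ j : ℕ, C - A - B ≠ -j) :
    Tendsto (fun K : ℕ => poch (C - A) K * poch (C - B) K / (poch C K * poch (C - A - B) K))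
      atTop (𝓝 (Gamma C * Gamma (C - A - B) / (Gamma (C - A) * Gamma (C - B)))) := by
  have h := (tendsto_cpow_mul_poch_div_poch (C - A) hC).mul
    (tendsto_cpow_mul_poch_div_poch (C - B) hCAB)
  rw [div_mul_div_comm] at h
  refine h.congr' ?_
  filter_upwards [eventually_ne_atTop 0] with K hK
  have hpow : (K : ℂ) ^ (C - (C - A)) * (K : ℂ) ^ (C - A - B - (C - B)) = 1 := by
    rw [← cpow_add _ _ (Nat.cast_ne_zero.mpr hK),
      show C - (C - A) + (C - A - B - (C - B)) = 0 by ring, cpow_zero]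
  linear_combination (poch (C - A) K * poch (C - B) K / (poch C K * poch (C - A - B) K)) * hpow

/-- Gauss's summation theorem. -/
theorem tsum_hpg21Coeff_eq_Gamma (hC : ∀ j : ℕ, C ≠ -j)
    (hre : 0 < (C - A - B).re) :
    ∑' m, hpg21Coeff A B C m = Gamma C * Gamma (C - A - B) / (Gamma (C - A) * Gamma (C - B)) := by
  have hCAB : ∀ j : ℕ, C - A - B ≠ -j := ne_neg_natCast_of_re_pos hre
  have hratio : ∀ K : ℕ, ∑' m, hpg21Coeff A B C m =
      poch (C - A) K * poch (C - B) K / (poch C K * poch (C - A - B) K) *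
        ∑' m, hpg21Coeff A B (C + K) m := fun K => by
    rw [div_mul_eq_mul_div, eq_div_iff (mul_ne_zero (poch_ne_zero hC K) (poch_ne_zero hCAB K)),
      mul_comm, poch_mul_tsum_hpg21Coeff A B hC hre K]
  have h := (tendsto_poch_ratio A B hC hCAB).mul (tendsto_tsum_hpg21Coeff_add_natCast A B C)
  rw [mul_one] at h
  exact tendsto_nhds_unique (tendsto_const_nhds.congr hratio) h

end Gauss

section F1

lemma one_le_radius_ordinaryHypergeometricSeries (A B : ℂ) {C : ℂ} (hC : ∀ j : ℕ, C ≠ -j) :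
    1 ≤ (ordinaryHypergeometricSeries ℂ A B C).radius := by
  by_cases hA : ∃ k : ℕ, A = -k
  · obtain ⟨k, rfl⟩ := hA
    simp [ordinaryHypergeometric_radius_top_of_neg_nat₁]
  by_cases hB : ∃ k : ℕ, B = -k
  · obtain ⟨k, rfl⟩ := hB
    simp [ordinaryHypergeometric_radius_top_of_neg_nat₂]
  push Not at hA hB
  rw [ordinaryHypergeometricSeries_radius_eq_one]
  exact fun k => ⟨fun h => hA k (by linear_combination h), fun h => hB k (by linear_combination h),
    fun h => hC k (by linear_combination h)⟩

lemma summable_norm_hpg21Coeff_mul_pow (A B : ℂ) {C : ℂ} (hC : ∀ j : ℕ, C ≠ -j) {x : ℂ}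
    (hx : ‖x‖ < 1) : Summable fun n => ‖hpg21Coeff A B C n * x ^ n‖ := by
  have hmem : x ∈ Metric.eball (0 : ℂ) (ordinaryHypergeometricSeries ℂ A B C).radius := by
    rw [mem_eball_zero_iff, ← ofReal_norm]
    exact (ENNReal.ofReal_lt_one.mpr hx).trans_le
      (one_le_radius_ordinaryHypergeometricSeries A B hC)
  refine (FormalMultilinearSeries.summable_norm_apply _ hmem).congr fun n => ?_
  rw [ordinaryHypergeometricSeries_apply_eq, smul_eq_mul, hpg21Coeff, poch, poch, poch]
  ring_nf

lemma norm_hpg21Coeff_le_of_one_add_le (A B : ℂ) {z : ℂ} (hz : ∀ j : ℕ, 1 + j ≤ ‖z + j‖)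
    (n : ℕ) : ‖hpg21Coeff A B z n‖ ≤ ‖hpg21Coeff (1 + ‖A - z‖ : ℝ) ‖B‖ 1 n‖ := by
  set s := ‖A - z‖
  have h1 : ∀ j : ℕ, ‖(1 : ℂ) + j‖ = 1 + j := by simpa using norm_ofReal_add_natCast zero_le_one
  have hA : ‖poch A n‖ * ‖poch 1 n‖ ≤ ‖poch (1 + s : ℝ) n‖ * ‖poch z n‖ := by
    refine norm_poch_mul_norm_poch_le (fun j => ?_) n
    have hAj : ‖A + j‖ ≤ ‖z + j‖ + s := by
      rw [show A + j = (z + j) + (A - z) by ring]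
      exact norm_add_le _ _
    rw [h1, norm_ofReal_add_natCast (by positivity)]
    nlinarith [hz j, norm_nonneg (A - z)]
  have h1pos : 0 < ‖poch 1 n‖ := by rw [poch_one, norm_natCast]; exact_mod_cast n.factorial_pos
  have hZpos : 0 < ‖poch z n‖ :=
    h1pos.trans_le (norm_poch_le_norm_poch (fun j => (h1 j).trans_le (hz j)) n)
  have hf : (0 : ℝ) < n.factorial := by positivity
  rw [norm_hpg21Coeff, norm_hpg21Coeff]
  calc ‖poch A n‖ * ‖poch B n‖ / (‖poch z n‖ * n.factorial)
      = ‖poch A n‖ * ‖poch 1 n‖ * ‖poch B n‖ / (‖poch 1 n‖ * ‖poch z n‖ * n.factorial) := by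
        field_simp
    _ ≤ ‖poch (1 + s : ℝ) n‖ * ‖poch z n‖ * ‖poch (‖B‖ : ℂ) n‖ /
          (‖poch 1 n‖ * ‖poch z n‖ * n.factorial) := by
        gcongr
        exact norm_poch_le_norm_poch_norm B n
    _ = ‖poch (1 + s : ℝ) n‖ * ‖poch (‖B‖ : ℂ) n‖ / (‖poch 1 n‖ * n.factorial) := by
        field_simp

lemma hpg21Coeff_mul_hpg21Coeff_shift (a b b' c : ℂ) (n m : ℕ) :
    hpg21Coeff a b c n * hpg21Coeff (a + n) b' (c + n) m =
      poch a (n + m) * poch b n * poch b' m /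
        (poch c (n + m) * n.factorial * m.factorial) := by
  rw [poch_add, poch_add, hpg21Coeff, hpg21Coeff]
  ring

theorem summable_hpg21Coeff_mul_hpg21Coeff (a b1 b2 : ℂ) {c x : ℂ} (hc : ∀ j : ℕ, c ≠ -j)
    (hre : 0 < (c - a - b2).re) (hx : ‖x‖ < 1) :
    Summable fun p : ℕ × ℕ =>
      hpg21Coeff a b2 c p.1 * (hpg21Coeff (a + p.1) b1 (c + p.1) p.2 * x ^ p.2) := by
  let H : ℕ → ℕ → ℂ := fun m n => hpg21Coeff (a + m) b1 (c + m) n * x ^ n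
  let V : ℕ → ℝ := fun n => ‖hpg21Coeff (1 + ‖a - c‖ : ℝ) ‖b1‖ 1 n * x ^ n‖
  have hV : Summable V :=
    summable_norm_hpg21Coeff_mul_pow _ _ (C := 1) (ne_neg_natCast_of_re_pos (by simp)) hx
  have hrow : ∀ m, Summable fun n => ‖H m n‖ :=
    fun m => summable_norm_hpg21Coeff_mul_pow _ _ (add_natCast_ne_neg_natCast hc m) hx
  have hunif : ∀ᶠ m : ℕ in atTop, ∀ n, ‖H m n‖ ≤ V n := by
    filter_upwards [eventually_ge_atTop ⌈‖c‖ + 1⌉₊] with m hm n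
    have hz : ∀ j : ℕ, 1 + j ≤ ‖c + m + j‖ := fun j => by
      have h1 := sub_norm_le_norm_add_natCast c (m + j)
      have h2 : ‖c‖ + 1 ≤ m := (Nat.le_ceil _).trans (by exact_mod_cast hm)
      push_cast at h1
      rw [add_assoc c]
      linarith
    have h := norm_hpg21Coeff_le_of_one_add_le (a + m) b1 hz n
    rw [show a + m - (c + m) = a - c by ring] at h
    simp only [H, V, norm_mul]
    gcongr
  show Summable fun p : ℕ × ℕ => hpg21Coeff a b2 c p.1 * H p.1 p.2
  refine Summable.of_norm ?_
  rw [summable_prod_of_nonneg fun _ => norm_nonneg _]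
  simp only [norm_mul, tsum_mul_left]
  refine ⟨fun m => (hrow m).mul_left _, summable_of_isBigO_nat
    (summable_norm_hpg21Coeff a b2 hc hre) (IsBigO.of_bound (∑' n, V n) ?_)⟩
  filter_upwards [hunif] with m hm
  rw [norm_mul, norm_norm, Real.norm_of_nonneg (tsum_nonneg fun _ => norm_nonneg _), mul_comm]
  exact mul_le_mul_of_nonneg_right (Summable.tsum_le_tsum hm (hrow m) hV) (norm_nonneg _)

lemma hpg21Coeff_mul_Gamma_div_Gamma (a b b' : ℂ) {c : ℂ} (hc : ∀ j : ℕ, c ≠ -j)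
    (hcb : ∀ j : ℕ, c - b' ≠ -j) (n : ℕ) :
    hpg21Coeff a b c n * (Gamma (c + n) / Gamma (c - b' + n)) =
      Gamma c / Gamma (c - b') * hpg21Coeff a b (c - b') n := by
  have := poch_ne_zero hc n
  have := poch_ne_zero hcb n
  have := Gamma_ne_zero hcb
  have : (n.factorial : ℂ) ≠ 0 := Nat.cast_ne_zero.mpr n.factorial_ne_zero
  rw [Gamma_add_natCast hc, Gamma_add_natCast hcb, hpg21Coeff, hpg21Coeff]
  field_simp

end F1

theorem F1_y_eq_one (a b1 b2 c x : ℂ) (hc : ∀ n : ℕ, c ≠ -(n : ℂ))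
    (hcb : ∀ n : ℕ, c - b2 ≠ -(n : ℂ)) (hre : 0 < (c - a - b2).re) (hx : ‖x‖ < 1) :
    F1 a b1 b2 c x 1 =
      Complex.Gamma c * Complex.Gamma (c - a - b2) /
        (Complex.Gamma (c - a) * Complex.Gamma (c - b2)) * hpg21 a b1 (c - b2) x := by
  set f : ℕ × ℕ → ℂ := fun p =>
    hpg21Coeff a b1 c p.1 * x ^ p.1 * hpg21Coeff (a + p.1) b2 (c + p.1) p.2
  have hf : Summable f := (summable_hpg21Coeff_mul_hpg21Coeff a b1 b2 hc hre hx).prod_symm.congr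
    fun p => by
      have e := hpg21Coeff_mul_hpg21Coeff_shift a b2 b1 c p.2 p.1
      rw [add_comm p.2] at e
      simp only [f, Prod.fst_swap, Prod.snd_swap]
      linear_combination x ^ p.1 * (e - hpg21Coeff_mul_hpg21Coeff_shift a b1 b2 c p.1 p.2)
  have hterm : ∀ p : ℕ × ℕ, poch a (p.1 + p.2) * poch b1 p.1 * poch b2 p.2 /
      (poch c (p.1 + p.2) * p.1.factorial * p.2.factorial) * x ^ p.1 * 1 ^ p.2 = f p := fun p => by
    rw [one_pow, mul_one]
    linear_combination -x ^ p.1 * hpg21Coeff_mul_hpg21Coeff_shift a b1 b2 c p.1 p.2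
  rw [F1, tsum_congr hterm, hf.tsum_prod' hf.prod_factor, hpg21_eq_tsum, ← tsum_mul_left]
  refine tsum_congr fun n => ?_
  simp only [f]
  rw [tsum_mul_left,
    tsum_hpg21Coeff_eq_Gamma _ _ (add_natCast_ne_neg_natCast hc n) (by simpa using hre),
    show c + n - (a + n) - b2 = c - a - b2 by ring, show c + n - (a + n) = c - a by ring,
    show c + n - b2 = c - b2 + n by ring]
  linear_combination (x ^ n * Gamma (c - a - b2) / Gamma (c - a)) *
    hpg21Coeff_mul_Gamma_div_Gamma a b1 b2 hc hcb n
end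

section
/- Reversal of a terminating double sum: for nonnegative integers k and ℓ, F2(a; -k, -ℓ; -2k, -2ℓ; x, y) = (k! ℓ! (a)_{k+ℓ} / ((2k)! (2ℓ)!)) x^k y^ℓ F3(k+1, ℓ+1; -k, -ℓ; 1-a-k-ℓ; 1/x, 1/y), where both sides are finite sums (polynomials in x, y times the indicated monomial), valid for all nonzero x, y. -/
noncomputable def F2fin (a : ℂ) (k l : ℕ) (x y : ℂ) : ℂ :=
  ∑ n ∈ Finset.range (k + 1), ∑ m ∈ Finset.range (l + 1),
    poch a (n + m) * poch (-(k : ℂ)) n * poch (-(l : ℂ)) m /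
      (poch (-(2 * (k : ℂ))) n * poch (-(2 * (l : ℂ))) m *
        (n.factorial : ℂ) * (m.factorial : ℂ)) * x ^ n * y ^ m

noncomputable def F3fin (a : ℂ) (k l : ℕ) (x y : ℂ) : ℂ :=
  ∑ n ∈ Finset.range (k + 1), ∑ m ∈ Finset.range (l + 1),
    poch ((k : ℂ) + 1) n * poch ((l : ℂ) + 1) m * poch (-(k : ℂ)) n * poch (-(l : ℂ)) m /
      (poch (1 - a - (k : ℂ) - (l : ℂ)) (n + m) * (n.factorial : ℂ) * (m.factorial : ℂ)) *
      x ^ n * y ^ m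

/-!
Reverse both summation indices, `n ↦ k - n` and `m ↦ ℓ - m`, and compare the sums term by term.
Writing `k = n + i`, the `x`-factors agree because `(-K)_n = (-1)^n K! / (K - n)!` and
`(K + 1)_i = (K + i)! / K!` turn both sides into the same factorial ratio; likewise for `y`.
The `a`-factors agree because `(a)_{k+ℓ} = (a)_{n+m} (a + n + m)_{i+j}` and the reflection
`(1 - c - r)_r = (-1)^r (c)_r` with `c = a + n + m`, `r = i + j`.
-/

open Polynomial Nat

lemma poch_add_s18 (a : ℂ) (s t : ℕ) : poch a (s + t) = poch a s * poch (a + s) t := by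
  simp [poch, ← ascPochhammer_mul, eval_comp]

lemma poch_neg_natCast {K n : ℕ} (h : n ≤ K) :
    poch (-(K : ℂ)) n = (-1) ^ n * K ! / (K - n)! := by
  rw [poch, ascPochhammer_eval_neg_eq_descPochhammer, descPochhammer_eval_eq_descFactorial,
    eq_div_iff (by simp [factorial_ne_zero]), mul_assoc, ← factorial_mul_descFactorial h]
  push_cast
  ring

lemma poch_natCast_add_one (K n : ℕ) : poch ((K : ℂ) + 1) n = (K + n)! / K ! := by
  rw [eq_div_iff (by simp [factorial_ne_zero]), mul_comm, poch]
  exact_mod_cast factorial_mul_ascPochhammer ℂ K n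

lemma poch_one_sub_sub (c : ℂ) (r : ℕ) : poch (1 - c - r) r = (-1) ^ r * poch c r := by
  rw [poch, poch, show 1 - c - r = -(c + r - 1) by ring, ascPochhammer_eval_neg_eq_descPochhammer,
    descPochhammer_eval_eq_ascPochhammer]
  ring_nf

lemma poch_mul_poch_one_sub_sub (a : ℂ) (s t : ℕ) :
    poch a s * poch (1 - a - s - t) t = (-1) ^ t * poch a (s + t) := by
  rw [sub_sub 1 a, poch_one_sub_sub, poch_add_s18]
  ring

lemma poch_ne_zero_s18 {a : ℂ} (ha : ∀ m : ℤ, a ≠ m) (n : ℕ) : poch a n ≠ 0 := by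
  rw [poch, Ne, ascPochhammer_eval_eq_zero_iff]
  rintro ⟨j, -, hj⟩
  exact ha (-j) (by push_cast; rw [hj, neg_neg])

lemma coeff_reversal (n i : ℕ) {x : ℂ} (hx : x ≠ 0) :
    poch (-((n + i : ℕ) : ℂ)) n / (poch (-(2 * ((n + i : ℕ) : ℂ))) n * n !) * x ^ n =
      (-1) ^ i * ((n + i)! / (2 * (n + i))!) * x ^ (n + i) *
        (poch ((n + i : ℕ) + 1) i * poch (-((n + i : ℕ) : ℂ)) i / i ! * (1 / x) ^ i) := by
  have hcast : (-(2 * ((n + i : ℕ) : ℂ))) = -((2 * (n + i) : ℕ) : ℂ) := by push_cast; ring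
  rw [hcast, poch_neg_natCast (by omega), poch_neg_natCast (by omega), poch_neg_natCast (by omega),
    poch_natCast_add_one, show n + i - n = i by omega, show n + i - i = n by omega,
    show 2 * (n + i) - n = n + i + i by omega, one_div_pow, pow_add]
  field_simp
  rw [← pow_mul, pow_mul', neg_one_sq, one_pow, mul_one]

noncomputable def F2term (a : ℂ) (k l n m : ℕ) (x y : ℂ) : ℂ :=
  poch a (n + m) * poch (-(k : ℂ)) n * poch (-(l : ℂ)) m /
    (poch (-(2 * (k : ℂ))) n * poch (-(2 * (l : ℂ))) m * (n ! : ℂ) * (m ! : ℂ)) * x ^ n * y ^ m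

noncomputable def F3term (a : ℂ) (k l n m : ℕ) (x y : ℂ) : ℂ :=
  poch ((k : ℂ) + 1) n * poch ((l : ℂ) + 1) m * poch (-(k : ℂ)) n * poch (-(l : ℂ)) m /
    (poch (1 - a - (k : ℂ) - (l : ℂ)) (n + m) * (n ! : ℂ) * (m ! : ℂ)) * x ^ n * y ^ m

lemma F2fin_eq_sum (a : ℂ) (k l : ℕ) (x y : ℂ) :
    F2fin a k l x y = ∑ n ∈ Finset.range (k + 1), ∑ m ∈ Finset.range (l + 1), F2term a k l n m x y :=
  rfl

lemma F3fin_eq_sum (a : ℂ) (k l : ℕ) (x y : ℂ) :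
    F3fin a k l x y = ∑ n ∈ Finset.range (k + 1), ∑ m ∈ Finset.range (l + 1), F3term a k l n m x y :=
  rfl

lemma F2term_eq_F3term {a : ℂ} (ha : ∀ m : ℤ, a ≠ m) {x y : ℂ} (hx : x ≠ 0) (hy : y ≠ 0)
    (n i m j : ℕ) :
    F2term a (n + i) (m + j) n m x y =
      (n + i)! * (m + j)! * poch a (n + i + (m + j)) / ((2 * (n + i))! * (2 * (m + j))!) *
        x ^ (n + i) * y ^ (m + j) * F3term a (n + i) (m + j) i j (1 / x) (1 / y) := by
  set P := poch a (n + i + (m + j))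
  set D := poch (1 - a - ((n + i : ℕ) : ℂ) - ((m + j : ℕ) : ℂ)) (i + j)
  have hrefl : poch a (n + m) * D = (-1) ^ (i + j) * P := by
    convert poch_mul_poch_one_sub_sub a (n + m) (i + j) using 3 <;> push_cast <;> ring_nf
  have hD : D ≠ 0 :=
    right_ne_zero_of_mul (hrefl ▸ mul_ne_zero (by simp) (poch_ne_zero_s18 ha _))
  have hsign : ((-1 : ℂ) ^ (i + j)) ^ 2 = 1 := by rw [← pow_mul, pow_mul', neg_one_sq, one_pow]
  calc F2term a (n + i) (m + j) n m x y
      = poch a (n + m) *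
          (poch (-((n + i : ℕ) : ℂ)) n / (poch (-(2 * ((n + i : ℕ) : ℂ))) n * n !) * x ^ n) *
          (poch (-((m + j : ℕ) : ℂ)) m / (poch (-(2 * ((m + j : ℕ) : ℂ))) m * m !) * y ^ m) := by
        rw [F2term]; ring
    -- the sign `(-1)^(i+j)` enters once from the reflection and once from the two reversals
    _ = ((-1 : ℂ) ^ (i + j)) ^ 2 * (n + i)! * (m + j)! * P / ((2 * (n + i))! * (2 * (m + j))!) *
          x ^ (n + i) * y ^ (m + j) *
          ((poch ((n + i : ℕ) + 1) i * poch (-((n + i : ℕ) : ℂ)) i / i ! * (1 / x) ^ i) *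
            (poch ((m + j : ℕ) + 1) j * poch (-((m + j : ℕ) : ℂ)) j / j ! * (1 / y) ^ j) / D) := by
        rw [eq_div_of_mul_eq hD hrefl, coeff_reversal n i hx, coeff_reversal m j hy]; ring
    _ = _ := by rw [hsign, F3term]; ring

theorem F2_F3_reversal (a : ℂ) (k l : ℕ) (ha : ∀ m : ℤ, a ≠ (m : ℂ))
    (x y : ℂ) (hx : x ≠ 0) (hy : y ≠ 0) :
    F2fin a k l x y =
      (k.factorial : ℂ) * (l.factorial : ℂ) * poch a (k + l) /
          (((2 * k).factorial : ℂ) * ((2 * l).factorial : ℂ)) *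
        x ^ k * y ^ l * F3fin a k l (1 / x) (1 / y) := by
  rw [F2fin_eq_sum, F3fin_eq_sum, Finset.mul_sum, ← Finset.sum_range_reflect]
  refine Finset.sum_congr rfl fun n hn => ?_
  rw [Finset.mul_sum, ← Finset.sum_range_reflect]
  refine Finset.sum_congr rfl fun m hm => ?_
  obtain ⟨i, rfl⟩ : ∃ i, k = i + n := Nat.exists_eq_add_of_le' (Finset.mem_range_succ_iff.mp hn)
  obtain ⟨j, rfl⟩ : ∃ j, l = j + m := Nat.exists_eq_add_of_le' (Finset.mem_range_succ_iff.mp hm)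
  rw [Nat.add_sub_cancel, Nat.add_sub_cancel, Nat.add_sub_cancel, Nat.add_sub_cancel]
  exact F2term_eq_F3term ha hx hy i n j m
end
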